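/- For all integers m ≥ 2 and n ≥ 1, χ_la(K_{2n} ∨ C_{2m−1}) = 2n + 3. -/

import Mathlib

/-!
Lower bound: in a local antimagic labeling of `G ∨ H` the vertex sums properly colour `G` and `H`,
and every vertex of `G` is adjacent to every vertex of `H`, so at least `χ(G) + χ(H) = 2n + 3`
sums occur.

Upper bound, with `k = 2l + 3`: label the cycle with `1, …, k` so that its vertex sums take only
three values; label the edges between `K_{2n}` and `C_k` with `k + 1, …, k + 2nk` along a snake
through a `2n × k` grid, whose column sums are all equal and whose row sums grow by `k²` from
row to row; give `K_{2n}` the largest labels in any order. Handing out the rows in increasing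
order of the `K_{2n}`-sums makes the `2n` vertex sums of `K_{2n}` distinct, and each of them
exceeds every cycle vertex sum.
-/

open Finset SimpleGraph
open scoped Classical

/-- The induced vertex label (weight) of `x`: the sum of `f` over all edges incident to `x`. -/
noncomputable def vertexWeight {V : Type*} [Fintype V] (G : SimpleGraph V)
    (f : Sym2 V → ℕ) (x : V) : ℕ :=
  ∑ e ∈ G.edgeFinset.filter (fun e => x ∈ e), f e

/-- `f` is a local antimagic labeling of `G`: it restricts to a bijection from the edge set of
`G` onto `{1, …, q}` (where `q` is the number of edges), and adjacent vertices get distinct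
induced vertex labels. -/
def IsLocalAntimagic {V : Type*} [Fintype V] (G : SimpleGraph V) (f : Sym2 V → ℕ) : Prop :=
  Set.BijOn f G.edgeSet (Set.Icc 1 G.edgeSet.ncard) ∧
  ∀ ⦃x y : V⦄, G.Adj x y → vertexWeight G f x ≠ vertexWeight G f y

/-- The number of distinct induced vertex labels, `c(f)`. -/
noncomputable def colorCount {V : Type*} [Fintype V] (G : SimpleGraph V)
    (f : Sym2 V → ℕ) : ℕ :=
  (Finset.univ.image (vertexWeight G f)).card

/-- The local antimagic chromatic number `χ_la(G)`. -/
noncomputable def chiLA {V : Type*} [Fintype V] (G : SimpleGraph V) : ℕ :=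
  sInf { n | ∃ f : Sym2 V → ℕ, IsLocalAntimagic G f ∧ colorCount G f = n }

/-- The join `G ∨ H` of two vertex-disjoint graphs. -/
def joinG {α β : Type*} (G : SimpleGraph α) (H : SimpleGraph β) : SimpleGraph (α ⊕ β) :=
  SimpleGraph.fromRel (fun x y =>
    (∃ a b, x = Sum.inl a ∧ y = Sum.inl b ∧ G.Adj a b) ∨
    (∃ a b, x = Sum.inr a ∧ y = Sum.inr b ∧ H.Adj a b) ∨
    (∃ a b, x = Sum.inl a ∧ y = Sum.inr b))

lemma vertexWeight_eq_sum_ite {V : Type*} [Fintype V] (G : SimpleGraph V) (f : Sym2 V → ℕ)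
    (x : V) : vertexWeight G f x = ∑ y, if G.Adj x y then f s(x, y) else 0 := by
  have hinc : G.edgeFinset.filter (x ∈ ·) = (univ.filter (G.Adj x)).image (s(x, ·)) := by
    ext e
    induction e with
    | _ u v =>
      simp only [mem_filter, mem_edgeFinset, mem_edgeSet, mem_image, mem_univ, true_and,
        Sym2.mem_iff]
      constructor
      · rintro ⟨huv, rfl | rfl⟩
        exacts [⟨v, huv, rfl⟩, ⟨u, huv.symm, Sym2.eq_swap⟩]
      · rintro ⟨y, hy, hxy⟩
        rcases Sym2.eq_iff.mp hxy with ⟨rfl, rfl⟩ | ⟨rfl, rfl⟩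
        exacts [⟨hy, .inl rfl⟩, ⟨hy.symm, .inr rfl⟩]
  rw [vertexWeight, hinc, sum_image fun _ _ _ _ h => Sym2.congr_right.mp h, sum_filter]

lemma card_mul_le_vertexWeight {V : Type*} [Fintype V] {G : SimpleGraph V} {f : Sym2 V → ℕ}
    {t : ℕ} (hf : ∀ e ∈ G.edgeSet, t ≤ f e) {x : V} {s : Finset V} (hs : ∀ y ∈ s, G.Adj x y) :
    s.card * t ≤ vertexWeight G f x := by
  rw [vertexWeight_eq_sum_ite, ← smul_eq_mul]
  calc s.card • t ≤ ∑ y ∈ s, if G.Adj x y then f s(x, y) else 0 :=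
        card_nsmul_le_sum _ _ _ fun y hy => by rw [if_pos (hs y hy)]; exact hf _ (hs y hy)
    _ ≤ _ := sum_le_sum_of_subset (subset_univ s)

lemma chromaticNumber_le_card_image {V : Type*} [Fintype V] {G : SimpleGraph V} (w : V → ℕ)
    (hw : ∀ ⦃x y⦄, G.Adj x y → w x ≠ w y) : G.chromaticNumber ≤ (univ.image w).card := by
  let C : G.Coloring (univ.image w) :=
    Coloring.mk (fun v => ⟨w v, mem_image_of_mem w (mem_univ v)⟩)
      fun hxy h => hw hxy (congrArg Subtype.val h)
  simpa using C.colorable.chromaticNumber_le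

lemma chiLA_eq_of_le {V : Type*} [Fintype V] {G : SimpleGraph V} {N : ℕ}
    (hex : ∃ f, IsLocalAntimagic G f ∧ colorCount G f ≤ N)
    (hle : ∀ f, IsLocalAntimagic G f → N ≤ colorCount G f) : chiLA G = N := by
  obtain ⟨f, hf, hfN⟩ := hex
  have hmem : N ∈ {c | ∃ f, IsLocalAntimagic G f ∧ colorCount G f = c} :=
    ⟨f, hf, le_antisymm hfN (hle f hf)⟩
  exact le_antisymm (Nat.sInf_le hmem)
    (le_csInf ⟨N, hmem⟩ fun _ ⟨g, hg, hgc⟩ => hgc ▸ hle g hg)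

lemma isLocalAntimagic_of_bijOn {V : Type*} [Fintype V] {G : SimpleGraph V} {f : Sym2 V → ℕ}
    {q : ℕ} (hf : Set.BijOn f G.edgeSet (Set.Icc 1 q))
    (hadj : ∀ ⦃x y⦄, G.Adj x y → vertexWeight G f x ≠ vertexWeight G f y) :
    IsLocalAntimagic G f := by
  have hq : G.edgeSet.ncard = q := by rw [hf.ncard_eq, Set.ncard_Icc_nat]; omega
  exact ⟨hq ▸ hf, hadj⟩

lemma exists_bijOn_Icc {γ : Type*} (s : Set γ) [Finite s] (o : ℕ) :
    ∃ g : γ → ℕ, Set.BijOn g s (Set.Icc (o + 1) (o + s.ncard)) := by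
  refine (Set.toFinite s).exists_bijOn_of_encard_eq ?_
  rw [(Set.toFinite s).cast_ncard_eq.symm, (Set.finite_Icc _ _).cast_ncard_eq.symm,
    Set.ncard_Icc_nat]
  norm_cast
  omega

lemma Set.BijOn.union_of_disjoint {γ δ : Type*} {f : γ → δ} {s₁ s₂ : Set γ} {t₁ t₂ : Set δ}
    (h₁ : Set.BijOn f s₁ t₁) (h₂ : Set.BijOn f s₂ t₂) (ht : Disjoint t₁ t₂) :
    Set.BijOn f (s₁ ∪ s₂) (t₁ ∪ t₂) := by
  refine h₁.union h₂ ?_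
  rintro x (hx | hx) y (hy | hy) hxy
  · exact h₁.injOn hx hy hxy
  · exact absurd hxy (ht.ne_of_mem (h₁.mapsTo hx) (h₂.mapsTo hy))
  · exact absurd hxy.symm (ht.ne_of_mem (h₁.mapsTo hy) (h₂.mapsTo hx))
  · exact h₂.injOn hx hy hxy

section join

variable {α β : Type*} {G : SimpleGraph α} {H : SimpleGraph β}

@[simp] lemma joinG_adj_inl_inl {a b : α} : (joinG G H).Adj (.inl a) (.inl b) ↔ G.Adj a b := by
  simp only [joinG, fromRel_adj, ne_eq, Sum.inl.injEq, reduceCtorEq, false_and, exists_false,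
    and_false, or_false, exists_and_left, exists_eq_left', G.adj_comm b a, or_self]
  exact and_iff_right_of_imp G.ne_of_adj

@[simp] lemma joinG_adj_inr_inr {c d : β} : (joinG G H).Adj (.inr c) (.inr d) ↔ H.Adj c d := by
  simp only [joinG, fromRel_adj, ne_eq, Sum.inr.injEq, reduceCtorEq, false_and, exists_false,
    and_false, false_or, or_false, exists_and_left, exists_eq_left', H.adj_comm d c, or_self]
  exact and_iff_right_of_imp H.ne_of_adj

@[simp] lemma joinG_adj_inl_inr {a : α} {c : β} : (joinG G H).Adj (.inl a) (.inr c) := by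
  simp [joinG]

@[simp] lemma joinG_adj_inr_inl {a : α} {c : β} : (joinG G H).Adj (.inr c) (.inl a) :=
  joinG_adj_inl_inr.symm

lemma forall_joinG_adj_ne_iff {w : α ⊕ β → ℕ} :
    (∀ ⦃x y⦄, (joinG G H).Adj x y → w x ≠ w y) ↔
      (∀ ⦃a b⦄, G.Adj a b → w (.inl a) ≠ w (.inl b)) ∧ (∀ a c, w (.inl a) ≠ w (.inr c)) ∧
        ∀ ⦃c d⦄, H.Adj c d → w (.inr c) ≠ w (.inr d) := by
  refine ⟨fun h => ⟨fun a b hab => h (by simpa), fun a c => h (by simp),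
    fun c d hcd => h (by simpa)⟩, ?_⟩
  rintro ⟨hG, hX, hH⟩ (a | c) (b | d) hxy
  · exact hG (by simpa using hxy)
  · exact hX a d
  · exact (hX b c).symm
  · exact hH (by simpa using hxy)

lemma card_image_univ_sum_of_ne {ι κ : Type*} [Fintype ι] [Fintype κ] {w : ι ⊕ κ → ℕ}
    (hw : ∀ a c, w (.inl a) ≠ w (.inr c)) :
    (univ.image w).card = (univ.image (w ∘ .inl)).card + (univ.image (w ∘ .inr)).card := by
  have himage : univ.image w = univ.image (w ∘ .inl) ∪ univ.image (w ∘ .inr) := by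
    ext; simp
  rw [himage, card_union_of_disjoint]
  simp only [Finset.disjoint_left, mem_image, mem_univ, true_and, Function.comp_apply]
  rintro _ ⟨a, rfl⟩ ⟨c, hc⟩
  exact hw a c hc.symm

variable [Fintype α] [Fintype β]

lemma chromaticNumber_add_le_colorCount_joinG {f : Sym2 (α ⊕ β) → ℕ}
    (hf : IsLocalAntimagic (joinG G H) f) :
    G.chromaticNumber + H.chromaticNumber ≤ colorCount (joinG G H) f := by
  obtain ⟨hG, hX, hH⟩ := forall_joinG_adj_ne_iff.mp hf.2
  rw [colorCount, card_image_univ_sum_of_ne hX, Nat.cast_add]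
  exact add_le_add (chromaticNumber_le_card_image _ hG) (chromaticNumber_le_card_image _ hH)

end join

section joinLabel

variable {α β : Type*}

def joinLabel (gG : Sym2 α → ℕ) (gX : α → β → ℕ) (gH : Sym2 β → ℕ) : Sym2 (α ⊕ β) → ℕ :=
  Sym2.lift ⟨fun
    | .inl a, .inl b => gG s(a, b)
    | .inl a, .inr c => gX a c
    | .inr c, .inl a => gX a c
    | .inr c, .inr d => gH s(c, d), by rintro (a | c) (b | d) <;> simp [Sym2.eq_swap]⟩

variable (gG : Sym2 α → ℕ) (gX : α → β → ℕ) (gH : Sym2 β → ℕ)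

@[simp] lemma joinLabel_inl_inl (a b : α) : joinLabel gG gX gH s(.inl a, .inl b) = gG s(a, b) :=
  rfl

@[simp] lemma joinLabel_inl_inr (a : α) (c : β) :
    joinLabel gG gX gH s(.inl a, .inr c) = gX a c :=
  rfl

@[simp] lemma joinLabel_inr_inl (a : α) (c : β) :
    joinLabel gG gX gH s(.inr c, .inl a) = gX a c :=
  rfl

@[simp] lemma joinLabel_inr_inr (c d : β) : joinLabel gG gX gH s(.inr c, .inr d) = gH s(c, d) :=
  rfl

lemma edgeSet_joinG (G : SimpleGraph α) (H : SimpleGraph β) :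
    (joinG G H).edgeSet = Sym2.map .inr '' H.edgeSet ∪
      Set.range (fun p : α × β => s(.inl p.1, .inr p.2)) ∪ Sym2.map .inl '' G.edgeSet := by
  ext e
  induction e with
  | _ x y =>
    rcases x with a | c <;> rcases y with b | d
    · simp [Sym2.exists, and_or_left, exists_or, G.adj_comm b a]
    · simp [Sym2.exists]
    · simp [Sym2.exists, Sym2.eq_swap]
    · simp [Sym2.exists, and_or_left, exists_or, H.adj_comm d c]

variable {gG gX gH} {G : SimpleGraph α} {H : SimpleGraph β}

lemma bijOn_joinLabel {a b c : ℕ} (hH : Set.BijOn gH H.edgeSet (Set.Icc 1 a))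
    (hX : Set.BijOn (Function.uncurry gX) Set.univ (Set.Icc (a + 1) (a + b)))
    (hG : Set.BijOn gG G.edgeSet (Set.Icc (a + b + 1) (a + b + c))) :
    Set.BijOn (joinLabel gG gX gH) (joinG G H).edgeSet (Set.Icc 1 (a + b + c)) := by
  have hIcc : Set.Icc 1 (a + b + c) =
      Set.Icc 1 a ∪ Set.Icc (a + 1) (a + b) ∪ Set.Icc (a + b + 1) (a + b + c) := by
    ext; simp only [Set.mem_union, Set.mem_Icc]; omega
  have hH' : Set.BijOn (joinLabel gG gX gH) (Sym2.map .inr '' H.edgeSet) (Set.Icc 1 a) := by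
    rw [← Set.bijOn_comp_iff (Sym2.map.injective Sum.inr_injective).injOn]
    exact hH.congr fun e _ => by induction e with | _ => rfl
  have hG' : Set.BijOn (joinLabel gG gX gH) (Sym2.map .inl '' G.edgeSet)
      (Set.Icc (a + b + 1) (a + b + c)) := by
    rw [← Set.bijOn_comp_iff (Sym2.map.injective Sum.inl_injective).injOn]
    exact hG.congr fun e _ => by induction e with | _ => rfl
  have hX' : Set.BijOn (joinLabel gG gX gH) (Set.range fun p : α × β => s(.inl p.1, .inr p.2))
      (Set.Icc (a + 1) (a + b)) := by
    rw [← Set.image_univ, ← Set.bijOn_comp_iff]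
    · exact hX
    · intro p _ q _ hpq
      simpa [Prod.ext_iff] using hpq
  rw [edgeSet_joinG, hIcc]
  refine (hH'.union_of_disjoint hX' ?_).union_of_disjoint hG' ?_ <;>
    simp only [Set.disjoint_left, Set.mem_union, Set.mem_Icc] <;> omega

variable [Fintype α] [Fintype β] (gG gX gH)

lemma vertexWeight_joinLabel_inl (a : α) :
    vertexWeight (joinG G H) (joinLabel gG gX gH) (.inl a) =
      vertexWeight G gG a + ∑ c, gX a c := by
  simp [vertexWeight_eq_sum_ite, Fintype.sum_sum_type]

lemma vertexWeight_joinLabel_inr (c : β) :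
    vertexWeight (joinG G H) (joinLabel gG gX gH) (.inr c) =
      ∑ a, gX a c + vertexWeight H gH c := by
  simp [vertexWeight_eq_sum_ite, Fintype.sum_sum_type]

end joinLabel

/-- Boustrophedon numbering of a grid with `k` columns: row `r` holds `r * k + 1, …, r * k + k`,
from left to right when `r` is even and from right to left when `r` is odd. -/
def snake (k r j : ℕ) : ℕ := r * k + if Even r then j + 1 else k - j

section snake

variable {k r j : ℕ}

lemma snake_bounds (hj : j < k) : r * k + 1 ≤ snake k r j ∧ snake k r j ≤ r * k + k := by
  unfold snake; split <;> omega

lemma snake_sub_one_div (hj : j < k) : (snake k r j - 1) / k = r := by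
  obtain ⟨h₁, h₂⟩ := snake_bounds (r := r) hj
  exact Nat.div_eq_of_lt_le (by omega) (by rw [add_mul, one_mul]; omega)

lemma bijOn_snake (o N k : ℕ) :
    Set.BijOn (fun p : Fin N × Fin k => o + snake k p.1 p.2) Set.univ
      (Set.Icc (o + 1) (o + N * k)) := by
  refine ⟨fun ⟨r, j⟩ _ => ?_, fun ⟨r₁, j₁⟩ _ ⟨r₂, j₂⟩ _ h => ?_, fun v hv => ?_⟩
  · have := snake_bounds (r := r) j.isLt
    have : (r + 1) * k ≤ N * k := Nat.mul_le_mul_right k r.isLt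
    simp only [Set.mem_Icc]
    constructor <;> nlinarith
  · have hs : snake k r₁ j₁ = snake k r₂ j₂ := by simpa using h
    have hr : r₁ = r₂ := Fin.ext <| by
      rw [← snake_sub_one_div (r := r₁) j₁.isLt, ← snake_sub_one_div (r := r₂) j₂.isLt, hs]
    subst hr
    unfold snake at hs
    ext <;> simp only
    split at hs <;> omega
  · obtain ⟨hv₁, hv₂⟩ := hv
    have hk : 0 < k := Nat.pos_of_ne_zero fun hk => by subst hk; omega
    obtain ⟨q, t, ht, rfl⟩ : ∃ q t, t < k ∧ v = o + 1 + q * k + t :=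
      ⟨(v - o - 1) / k, (v - o - 1) % k, Nat.mod_lt _ hk, by
        have := Nat.div_add_mod' (v - o - 1) k; omega⟩
    have hq : q < N := by
      by_contra! hq
      have := Nat.mul_le_mul_right k hq
      omega
    refine ⟨(⟨q, hq⟩, ⟨if Even q then t else k - 1 - t, by split <;> omega⟩), trivial, ?_⟩
    simp only [snake]
    split <;> omega

lemma sum_snake_row (k r : ℕ) :
    ∑ j : Fin k, snake k r j = r * k * k + ∑ j : Fin k, (j + 1 : ℕ) := by
  have hrev : ∑ j : Fin k, (k - j : ℕ) = ∑ j : Fin k, (j + 1 : ℕ) :=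
    Fintype.sum_equiv Fin.revPerm _ _ fun j => by simp only [Fin.revPerm_apply, Fin.val_rev]; omega
  unfold snake
  split <;>
    simp only [sum_add_distrib, sum_const, card_univ, Fintype.card_fin, smul_eq_mul, hrev] <;>
    ring

lemma sum_snake_col (n : ℕ) (hj : j < k) :
    ∑ r : Fin (2 * n), snake k r j = 2 * n * n * k + n := by
  rw [Fin.sum_univ_eq_sum_range (snake k · j)]
  induction n with
  | zero => simp
  | succ n ih =>
    have hpair : snake k (2 * n) j + snake k (2 * n + 1) j = 4 * n * k + 2 * k + 1 := by
      obtain ⟨t, rfl⟩ : ∃ t, k = j + 1 + t := ⟨k - j - 1, by omega⟩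
      simp only [snake, Nat.even_add_one, even_two_mul, not_true_eq_false, if_true, if_false,
        show j + 1 + t - j = t + 1 by omega]
      ring
    rw [show 2 * (n + 1) = 2 * n + 1 + 1 by ring, sum_range_succ, sum_range_succ, add_assoc, ih,
      hpair]
    ring

end snake

lemma injective_add_mul_sort_symm {N : ℕ} (D : Fin N → ℕ) {c : ℕ} (hc : 0 < c) :
    Function.Injective fun a => D a + c * ((Tuple.sort D).symm a : ℕ) := by
  have hmono : StrictMono fun i => D (Tuple.sort D i) + c * (i : ℕ) :=
    (Tuple.monotone_sort D).add_strictMono fun i j hij => Nat.mul_lt_mul_of_pos_left hij hc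
  intro a b hab
  simpa using hmono.injective (a₁ := (Tuple.sort D).symm a) (a₂ := (Tuple.sort D).symm b)
    (by simpa using hab)

section crossLabel

variable {N : ℕ} (D : Fin N → ℕ) (k : ℕ)

/-- Labels `k + 1, …, k + N * k` of the complete bipartite graph `Fin N × Fin k`: the vertex `a`
receives row `r` of the snake grid, where `a` is the `r`-th vertex in increasing order of `D`. -/
def crossLabel (a : Fin N) (j : Fin k) : ℕ := k + snake k ((Tuple.sort D).symm a) j

lemma bijOn_crossLabel :
    Set.BijOn (Function.uncurry (crossLabel D k)) Set.univ (Set.Icc (k + 1) (k + N * k)) := by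
  have hσ :
      Set.BijOn (Prod.map (Tuple.sort D).symm id) (Set.univ : Set (Fin N × Fin k)) Set.univ :=
    Set.bijOn_univ.mpr (Equiv.prodCongr (Tuple.sort D).symm (Equiv.refl (Fin k))).bijective
  exact (bijOn_snake k N k).comp hσ

lemma sum_crossLabel_row (a : Fin N) :
    ∑ j, crossLabel D k a j =
      k * k * ((Tuple.sort D).symm a : ℕ) + (k * k + ∑ j : Fin k, (j + 1 : ℕ)) := by
  simp only [crossLabel, sum_add_distrib, sum_const, card_univ, Fintype.card_fin, smul_eq_mul,
    sum_snake_row]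
  ring

end crossLabel

lemma sum_crossLabel_col {n k : ℕ} (D : Fin (2 * n) → ℕ) (j : Fin k) :
    ∑ a, crossLabel D k a j = 2 * n * k + (2 * n * n * k + n) := by
  simp only [crossLabel, sum_add_distrib, sum_const, card_univ, Fintype.card_fin, smul_eq_mul]
  rw [Equiv.sum_comp (Tuple.sort D).symm (snake k · j), sum_snake_col n j.isLt]

/-- Going around an odd cycle of length `k`, the edges are labelled `1, k, 2, k - 1, 3, …`, so
the two labels at a vertex other than `0` add up to `k + 1` or `k + 2`. -/
def cycleEdgeLabel (k j : ℕ) : ℕ := if Even j then j / 2 + 1 else k - j / 2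

lemma bijOn_cycleEdgeLabel {k : ℕ} (hk : Odd k) :
    Set.BijOn (fun j : Fin k => cycleEdgeLabel k j) Set.univ (Set.Icc 1 k) := by
  obtain ⟨t, rfl⟩ := hk
  refine ⟨fun j _ => ?_, fun i _ j _ h => ?_, fun v hv => ?_⟩
  · have := j.isLt
    simp only [cycleEdgeLabel, Set.mem_Icc]
    split <;> omega
  · have := i.isLt; have := j.isLt
    simp only [cycleEdgeLabel, Nat.even_iff] at h
    ext
    split at h <;> split at h <;> omega
  · obtain ⟨hv₁, hv₂⟩ := hv
    rcases le_or_gt v (t + 1) with hvt | hvt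
    · exact ⟨⟨2 * (v - 1), by omega⟩, trivial, by simp [cycleEdgeLabel]; omega⟩
    · refine ⟨⟨2 * (2 * t + 1 - v) + 1, by omega⟩, trivial, ?_⟩
      simp only [cycleEdgeLabel, Nat.even_add_one, even_two_mul, not_true_eq_false, if_false]
      omega

lemma edgeSet_cycleGraph (n : ℕ) :
    (cycleGraph (n + 2)).edgeSet = Set.range fun j => s(j, j + 1) := by
  ext e
  induction e with
  | _ u v =>
    simp only [mem_edgeSet, cycleGraph_adj, Set.mem_range, Sym2.eq_iff, sub_eq_iff_eq_add',
      exists_or, exists_eq_left]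
    rw [or_comm, eq_comm, @eq_comm _ u]

section cycleLabel

variable (l : ℕ)

lemma one_add_one_ne_zero_fin : (1 + 1 : Fin (2 * l + 3)) ≠ 0 := by
  intro h
  have := congrArg Fin.val h
  rw [Fin.val_add, Fin.val_one, Nat.mod_eq_of_lt (by omega)] at this
  exact absurd this (by simp)

def cycleLabel : Sym2 (Fin (2 * l + 3)) → ℕ :=
  Sym2.lift ⟨fun i j => if i + 1 = j then cycleEdgeLabel (2 * l + 3) i
    else if j + 1 = i then cycleEdgeLabel (2 * l + 3) j else 0, fun i j => by
      by_cases hij : i + 1 = j <;> by_cases hji : j + 1 = i <;>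
        simp only [hij, hji, if_true, if_false]
      rw [← hji, add_assoc, add_eq_left] at hij
      exact absurd hij (one_add_one_ne_zero_fin l)⟩

lemma cycleLabel_mk_add_one (j : Fin (2 * l + 3)) :
    cycleLabel l s(j, j + 1) = cycleEdgeLabel (2 * l + 3) j := by
  simp [cycleLabel]

lemma bijOn_cycleLabel :
    Set.BijOn (cycleLabel l) (cycleGraph (2 * l + 3)).edgeSet (Set.Icc 1 (2 * l + 3)) := by
  have hbij := bijOn_cycleEdgeLabel (k := 2 * l + 3) (odd_two_mul_add_one (l + 1))
  have hinj : Function.Injective fun j : Fin (2 * l + 3) => s(j, j + 1) := by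
    refine Function.Injective.of_comp (f := cycleLabel l) ?_
    simp only [Function.comp_def, cycleLabel_mk_add_one]
    exact Set.injOn_univ.mp hbij.injOn
  rw [edgeSet_cycleGraph, ← Set.image_univ, ← Set.bijOn_comp_iff hinj.injOn]
  simpa only [Function.comp_def, cycleLabel_mk_add_one] using hbij

lemma vertexWeight_cycleLabel (j : Fin (2 * l + 3)) :
    vertexWeight (cycleGraph (2 * l + 3)) (cycleLabel l) j =
      cycleEdgeLabel (2 * l + 3) ↑(j - 1) + cycleEdgeLabel (2 * l + 3) j := by
  have hne : j - 1 ≠ j + 1 := by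
    rw [ne_eq, sub_eq_iff_eq_add, add_assoc, left_eq_add]
    exact one_add_one_ne_zero_fin l
  have hadj (y) : (cycleGraph (2 * l + 3)).Adj j y ↔ y = j - 1 ∨ y = j + 1 :=
    Set.ext_iff.mp cycleGraph_neighborSet y
  have hprev := cycleLabel_mk_add_one l (j - 1)
  rw [sub_add_cancel] at hprev
  rw [vertexWeight_eq_sum_ite, Fintype.sum_eq_add (j - 1) (j + 1) hne ?_,
    if_pos ((hadj _).mpr (.inl rfl)), if_pos ((hadj _).mpr (.inr rfl)), cycleLabel_mk_add_one,
    Sym2.eq_swap, hprev]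
  exact fun y hy => if_neg fun h => by simp_all

lemma vertexWeight_cycleLabel_eq (j : Fin (2 * l + 3)) :
    vertexWeight (cycleGraph (2 * l + 3)) (cycleLabel l) j =
      if (j : ℕ) = 0 then l + 3 else if Even (j : ℕ) then 2 * l + 5 else 2 * l + 4 := by
  have := j.isLt
  rw [vertexWeight_cycleLabel, Fin.coe_sub_one]
  simp only [cycleEdgeLabel, Nat.even_iff, Fin.ext_iff, Fin.val_zero]
  split_ifs <;> omega

lemma vertexWeight_cycleLabel_mem (j : Fin (2 * l + 3)) :
    vertexWeight (cycleGraph (2 * l + 3)) (cycleLabel l) j ∈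
      ({l + 3, 2 * l + 4, 2 * l + 5} : Finset ℕ) := by
  rw [vertexWeight_cycleLabel_eq]
  split_ifs <;> simp

lemma vertexWeight_cycleLabel_ne_of_adj {i j : Fin (2 * l + 3)}
    (h : (cycleGraph (2 * l + 3)).Adj i j) :
    vertexWeight (cycleGraph (2 * l + 3)) (cycleLabel l) i ≠
      vertexWeight (cycleGraph (2 * l + 3)) (cycleLabel l) j := by
  wlog hij : j = i + 1 generalizing i j
  · have hji : i = j + 1 := by
      rw [cycleGraph_adj, sub_eq_iff_eq_add', sub_eq_iff_eq_add'] at h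
      exact h.resolve_right hij
    exact (this h.symm hji).symm
  have := i.isLt
  have hval :
      ((i + 1 : Fin (2 * l + 3)) : ℕ) = if (i : ℕ) = 2 * l + 2 then 0 else (i : ℕ) + 1 := by
    rw [Fin.val_add_one]
    simp only [Fin.ext_iff, Fin.val_last]
  rw [vertexWeight_cycleLabel_eq, vertexWeight_cycleLabel_eq, hij]
  simp only [Nat.even_iff]
  split_ifs at hval ⊢ <;> omega

end cycleLabel

section construction

variable (n l : ℕ) (gK : Sym2 (Fin (2 * n)) → ℕ)

local notation "𝒢" => joinG (⊤ : SimpleGraph (Fin (2 * n))) (cycleGraph (2 * l + 3))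

noncomputable def topJoinCycleLabel : Sym2 (Fin (2 * n) ⊕ Fin (2 * l + 3)) → ℕ :=
  joinLabel gK (crossLabel (vertexWeight ⊤ gK) (2 * l + 3)) (cycleLabel l)

lemma vertexWeight_topJoinCycleLabel_inl (a : Fin (2 * n)) :
    vertexWeight 𝒢 (topJoinCycleLabel n l gK) (.inl a) =
      vertexWeight ⊤ gK a +
        (2 * l + 3) * (2 * l + 3) * (Tuple.sort (vertexWeight ⊤ gK)).symm a +
        ((2 * l + 3) * (2 * l + 3) + ∑ j : Fin (2 * l + 3), (j + 1 : ℕ)) := by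
  rw [topJoinCycleLabel, vertexWeight_joinLabel_inl, sum_crossLabel_row, add_assoc]

lemma vertexWeight_topJoinCycleLabel_inr (j : Fin (2 * l + 3)) :
    vertexWeight 𝒢 (topJoinCycleLabel n l gK) (.inr j) =
      2 * n * (2 * l + 3) + (2 * n * n * (2 * l + 3) + n) +
        vertexWeight (cycleGraph (2 * l + 3)) (cycleLabel l) j := by
  rw [topJoinCycleLabel, vertexWeight_joinLabel_inr, sum_crossLabel_col]

lemma injective_vertexWeight_topJoinCycleLabel_inl :
    Function.Injective fun a => vertexWeight 𝒢 (topJoinCycleLabel n l gK) (.inl a) := by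
  simp only [vertexWeight_topJoinCycleLabel_inl]
  exact (add_left_injective _).comp (injective_add_mul_sort_symm _ (by positivity))

lemma vertexWeight_topJoinCycleLabel_inr_lt_inl (hn : 1 ≤ n)
    (hK : ∀ e ∈ (⊤ : SimpleGraph (Fin (2 * n))).edgeSet,
      (2 * l + 3) + 2 * n * (2 * l + 3) + 1 ≤ gK e)
    (j : Fin (2 * l + 3)) (a : Fin (2 * n)) :
    vertexWeight 𝒢 (topJoinCycleLabel n l gK) (.inr j) <
      vertexWeight 𝒢 (topJoinCycleLabel n l gK) (.inl a) := by
  have hK' := card_mul_le_vertexWeight hK (s := univ.erase a)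
    fun y hy => (ne_of_mem_erase hy).symm
  rw [card_erase_of_mem (mem_univ a), card_univ, Fintype.card_fin] at hK'
  have hC : vertexWeight (cycleGraph (2 * l + 3)) (cycleLabel l) j ≤ 2 * l + 5 := by
    have := vertexWeight_cycleLabel_mem l j
    simp only [mem_insert, mem_singleton] at this
    omega
  rw [vertexWeight_topJoinCycleLabel_inl, vertexWeight_topJoinCycleLabel_inr]
  generalize ((Tuple.sort (vertexWeight ⊤ gK)).symm a : ℕ) = r
  generalize ∑ j : Fin (2 * l + 3), (j + 1 : ℕ) = s
  obtain ⟨m, rfl⟩ : ∃ m, n = m + 1 := ⟨n - 1, by omega⟩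
  rw [show 2 * (m + 1) - 1 = 2 * m + 1 by omega] at hK'
  nlinarith [Nat.zero_le ((2 * l + 3) * (2 * l + 3) * r), Nat.zero_le (m * m * l)]

theorem exists_isLocalAntimagic_top_join_cycleGraph (hn : 1 ≤ n) :
    ∃ f, IsLocalAntimagic 𝒢 f ∧ colorCount 𝒢 f ≤ 2 * n + 3 := by
  obtain ⟨gK, hK⟩ := exists_bijOn_Icc (⊤ : SimpleGraph (Fin (2 * n))).edgeSet
    ((2 * l + 3) + 2 * n * (2 * l + 3))
  set w := vertexWeight 𝒢 (topJoinCycleLabel n l gK)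
  have hlt (a : Fin (2 * n)) (j : Fin (2 * l + 3)) : w (.inr j) < w (.inl a) :=
    vertexWeight_topJoinCycleLabel_inr_lt_inl n l gK hn (fun e he => (hK.mapsTo he).1) j a
  have hinl := injective_vertexWeight_topJoinCycleLabel_inl n l gK
  refine ⟨topJoinCycleLabel n l gK, isLocalAntimagic_of_bijOn
    (bijOn_joinLabel (bijOn_cycleLabel l) (bijOn_crossLabel _ _) hK)
    (forall_joinG_adj_ne_iff.mpr ⟨fun a b hab => hinl.ne hab.ne, fun a j => (hlt a j).ne',
      fun i j hij => ?_⟩), ?_⟩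
  · simp only [vertexWeight_topJoinCycleLabel_inr]
    exact (add_right_injective _).ne (vertexWeight_cycleLabel_ne_of_adj l hij)
  · have hcycle : univ.image (w ∘ .inr) ⊆ ({l + 3, 2 * l + 4, 2 * l + 5} : Finset ℕ).image
        (2 * n * (2 * l + 3) + (2 * n * n * (2 * l + 3) + n) + ·) := by
      intro x hx
      obtain ⟨j, -, rfl⟩ := mem_image.mp hx
      simp only [w, Function.comp_apply, vertexWeight_topJoinCycleLabel_inr]
      exact mem_image_of_mem _ (vertexWeight_cycleLabel_mem l j)
    rw [colorCount, card_image_univ_sum_of_ne fun a j => (hlt a j).ne']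
    have h₁ := (card_image_le (s := univ) (f := w ∘ .inl)).trans_eq (card_fin (2 * n))
    have h₂ := (card_le_card hcycle).trans (card_image_le.trans card_le_three)
    omega

end construction

/-- Theorem: For all integers `m ≥ 2` and `n ≥ 1`, `χ_la(K_{2n} ∨ C_{2m−1}) = 2n + 3`. -/
theorem chiLA_completeEven_join_oddCycle (m n : ℕ) (hm : 2 ≤ m) (hn : 1 ≤ n) :
    chiLA (joinG (⊤ : SimpleGraph (Fin (2 * n))) (cycleGraph (2 * m - 1))) = 2 * n + 3 := by
  obtain ⟨l, rfl⟩ : ∃ l, m = l + 2 := ⟨m - 2, by omega⟩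
  rw [show 2 * (l + 2) - 1 = 2 * l + 3 by omega]
  refine chiLA_eq_of_le (exists_isLocalAntimagic_top_join_cycleGraph n l hn) fun f hf => ?_
  have hχ := chromaticNumber_add_le_colorCount_joinG hf
  rw [chromaticNumber_top, chromaticNumber_cycleGraph_of_odd _ (by omega) ⟨l + 1, by ring⟩,
    Fintype.card_fin] at hχ
  exact_mod_cast hχ
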